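/- Let σ > 0, U : ℝ^d → ℝ, and let Ψ : Θ → ℂ be C³ and nowhere zero on an open connected set Θ ⊆ ℝ × ℝ^d, with Θ having connected time-slices. Suppose that for every k = 1,…,d, on Θ one has iσ²( ∂_t(∂_kΨ/Ψ) + b̄ · ∇(∂_kΨ/Ψ) − i(σ²/2) Δ(∂_kΨ/Ψ) ) = ∂_k U, where b̄ = −iσ² ∇Ψ/Ψ. Then the function F := iσ² ∂_tΨ/Ψ + (σ⁴/2) ΔΨ/Ψ − U has vanishing spatial gradient on Θ, i.e. ∇_x F = 0, so F depends only on t on each connected time-slice. -/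

import Mathlib

open Filter Topology ContinuousLinearMap

/-- Spatial partial derivative in direction `j` of a complex-valued function on `ℝ × (Fin d → ℝ)`. -/
noncomputable def pdx (d : ℕ) (j : Fin d) (f : ℝ × (Fin d → ℝ) → ℂ) (q : ℝ × (Fin d → ℝ)) : ℂ :=
  fderiv ℝ (fun y => f (q.1, y)) q.2 (Pi.single j 1)

/-- Time derivative of a complex-valued function on `ℝ × (Fin d → ℝ)`. -/
noncomputable def pdt (d : ℕ) (f : ℝ × (Fin d → ℝ) → ℂ) (q : ℝ × (Fin d → ℝ)) : ℂ :=
  deriv (fun s => f (s, q.2)) q.1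

section aux
variable {E : Type*} [NormedAddCommGroup E] [NormedSpace ℝ E]

/-- first directional derivative -/
noncomputable def d1 (f : E → ℂ) (v : E) (r : E) : ℂ := fderiv ℝ f r v
/-- second directional derivative -/
noncomputable def d2 (f : E → ℂ) (v w : E) (r : E) : ℂ := fderiv ℝ (d1 f v) r w
/-- third directional derivative -/
noncomputable def d3 (f : E → ℂ) (v w u : E) (r : E) : ℂ := fderiv ℝ (d2 f v w) r u

lemma fderiv_apply_apply {f : E → ℂ} {x : E} (hf : ContDiffAt ℝ 2 f x) (v w : E) :
    fderiv ℝ (fun p => fderiv ℝ f p v) x w = fderiv ℝ (fderiv ℝ f) x w v := by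
  have hd : DifferentiableAt ℝ (fderiv ℝ f) x :=
    (hf.fderiv_right (m := 1) le_rfl).differentiableAt one_ne_zero
  have : fderiv ℝ (fun p => fderiv ℝ f p v) x
      = (ContinuousLinearMap.apply ℝ ℂ v).comp (fderiv ℝ (fderiv ℝ f) x) :=
    ((ContinuousLinearMap.apply ℝ ℂ v).hasFDerivAt.comp x hd.hasFDerivAt).fderiv
  rw [this]; rfl

lemma d2_comm {f : E → ℂ} {x : E} (hf : ContDiffAt ℝ 2 f x) (v w : E) :
    d2 f v w x = d2 f w v x := by
  have h := fderiv_apply_apply hf v w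
  have h' := fderiv_apply_apply hf w v
  have hs := (hf.isSymmSndFDerivAt (by simp)) w v
  unfold d2 d1
  rw [h, h', hs]

lemma diff_fderiv_apply {f : E → ℂ} {x : E} (hf : ContDiffAt ℝ 2 f x) (v : E) :
    DifferentiableAt ℝ (d1 f v) x := by
  have hd : DifferentiableAt ℝ (fderiv ℝ f) x :=
    (hf.fderiv_right (m := 1) le_rfl).differentiableAt one_ne_zero
  exact ((ContinuousLinearMap.apply ℝ ℂ v).differentiable.differentiableAt).comp x hd

lemma contDiffAt_fderiv_apply {f : E → ℂ} {x : E} (hf : ContDiffAt ℝ 3 f x) (v : E) :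
    ContDiffAt ℝ 2 (d1 f v) x := by
  have hd : ContDiffAt ℝ 2 (fderiv ℝ f) x := hf.fderiv_right (m := 2) (by norm_num)
  exact (ContinuousLinearMap.apply ℝ ℂ v).contDiff.comp_contDiffAt x hd

lemma diffAt_div {f g : E → ℂ} {x : E} (hf : DifferentiableAt ℝ f x)
    (hg : DifferentiableAt ℝ g x) (hx : g x ≠ 0) :
    DifferentiableAt ℝ (fun y => f y / g y) x := by
  simp only [div_eq_mul_inv]
  exact hf.mul (hg.inv hx)

lemma fderiv_div_apply {f g : E → ℂ} {x : E} (hf : DifferentiableAt ℝ f x)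
    (hg : DifferentiableAt ℝ g x) (hx : g x ≠ 0) (v : E) :
    fderiv ℝ (fun y => f y / g y) x v
      = (fderiv ℝ f x v * g x - f x * fderiv ℝ g x v) / (g x) ^ 2 := by
  have hinv : HasFDerivAt (fun y => (g y)⁻¹)
      ((-mulLeftRight ℝ ℂ (g x)⁻¹ (g x)⁻¹).comp (fderiv ℝ g x)) x :=
    (hasFDerivAt_inv' hx).comp x hg.hasFDerivAt
  have H : HasFDerivAt (fun y => f y * (g y)⁻¹) _ x := hf.hasFDerivAt.mul hinv
  have : fderiv ℝ (fun y => f y / g y) x = fderiv ℝ (fun y => f y * (g y)⁻¹) x := by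
    simp only [div_eq_mul_inv]
  rw [this, H.fderiv]
  simp only [ContinuousLinearMap.add_apply, ContinuousLinearMap.coe_smul', Pi.smul_apply,
    ContinuousLinearMap.coe_comp', Function.comp_apply, ContinuousLinearMap.neg_apply,
    mulLeftRight_apply, smul_eq_mul]
  field_simp
  ring

lemma fderiv_mul_apply {f g : E → ℂ} {x : E} (hf : DifferentiableAt ℝ f x)
    (hg : DifferentiableAt ℝ g x) (v : E) :
    fderiv ℝ (fun y => f y * g y) x v
      = fderiv ℝ f x v * g x + f x * fderiv ℝ g x v := by
  rw [fderiv_fun_mul hf hg]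
  simp only [ContinuousLinearMap.add_apply, ContinuousLinearMap.coe_smul', Pi.smul_apply,
    smul_eq_mul]
  ring

end aux

def evv (d : ℕ) (j : Fin d) : ℝ × (Fin d → ℝ) := ((0 : ℝ), Pi.single j 1)

def etv (d : ℕ) : ℝ × (Fin d → ℝ) := ((1 : ℝ), (0 : Fin d → ℝ))

lemma pdx_eq {d : ℕ} (j : Fin d) {f : ℝ × (Fin d → ℝ) → ℂ} {q : ℝ × (Fin d → ℝ)}
    (h : DifferentiableAt ℝ f q) :
    pdx d j f q = d1 f (evv d j) q := by
  have hg : HasFDerivAt (fun y : Fin d → ℝ => (q.1, y))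
      ((0 : (Fin d → ℝ) →L[ℝ] ℝ).prod (ContinuousLinearMap.id ℝ (Fin d → ℝ))) q.2 :=
    (hasFDerivAt_const q.1 q.2).prodMk (hasFDerivAt_id q.2)
  have h' : HasFDerivAt (fun y => f (q.1, y))
      ((fderiv ℝ f q).comp ((0 : (Fin d → ℝ) →L[ℝ] ℝ).prod (ContinuousLinearMap.id ℝ (Fin d → ℝ)))) q.2 :=
    (h.hasFDerivAt).comp q.2 hg
  rw [pdx, h'.fderiv]
  simp [d1, evv]

lemma pdt_eq {d : ℕ} {f : ℝ × (Fin d → ℝ) → ℂ} {q : ℝ × (Fin d → ℝ)}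
    (h : DifferentiableAt ℝ f q) :
    pdt d f q = d1 f (etv d) q := by
  have hg : HasDerivAt (fun s : ℝ => (s, q.2)) ((1 : ℝ), (0 : Fin d → ℝ)) q.1 :=
    (hasDerivAt_id q.1).prodMk (hasDerivAt_const q.1 q.2)
  have h' : HasDerivAt (fun s => f (s, q.2)) (fderiv ℝ f q ((1 : ℝ), (0 : Fin d → ℝ))) q.1 :=
    (h.hasFDerivAt).comp_hasDerivAt q.1 hg
  rw [pdt, h'.deriv]; rfl

lemma pdx_congr {d : ℕ} (j : Fin d) {f g : ℝ × (Fin d → ℝ) → ℂ} {q : ℝ × (Fin d → ℝ)}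
    (h : f =ᶠ[𝓝 q] g) : pdx d j f q = pdx d j g q := by
  unfold pdx
  have : (fun y => f (q.1, y)) =ᶠ[𝓝 q.2] (fun y => g (q.1, y)) :=
    h.comp_tendsto ((Continuous.prodMk_right q.1).tendsto q.2)
  rw [this.fderiv_eq]

lemma pdt_congr {d : ℕ} {f g : ℝ × (Fin d → ℝ) → ℂ} {q : ℝ × (Fin d → ℝ)}
    (h : f =ᶠ[𝓝 q] g) : pdt d f q = pdt d g q := by
  unfold pdt
  have : (fun s => f (s, q.2)) =ᶠ[𝓝 q.1] (fun s => g (s, q.2)) :=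
    h.comp_tendsto ((continuous_id.prodMk continuous_const).tendsto q.1)
  rw [this.deriv_eq]

theorem gradient_of_schrodinger_expression_vanishes
    (d : ℕ) (σ : ℝ) (hσ : 0 < σ) (U : (Fin d → ℝ) → ℝ) (hU : ContDiff ℝ 1 U)
    (Θ : Set (ℝ × (Fin d → ℝ))) (hΘ : IsOpen Θ) (hΘconn : IsConnected Θ)
    (Ψ : ℝ × (Fin d → ℝ) → ℂ) (hΨ : ContDiffOn ℝ 3 Ψ Θ)
    (hne : ∀ q ∈ Θ, Ψ q ≠ 0)
    (heq : ∀ k : Fin d, ∀ q ∈ Θ,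
      Complex.I * (σ : ℂ) ^ 2 *
        (pdt d (fun r => pdx d k Ψ r / Ψ r) q
          + (∑ j, (-Complex.I * (σ : ℂ) ^ 2 * (pdx d j Ψ q / Ψ q))
              * pdx d j (fun r => pdx d k Ψ r / Ψ r) q)
          - Complex.I * ((σ : ℂ) ^ 2 / 2)
              * ∑ j, pdx d j (pdx d j (fun r => pdx d k Ψ r / Ψ r)) q)
        = ((fderiv ℝ U q.2 (Pi.single k 1) : ℝ) : ℂ)) :
    ∀ k : Fin d, ∀ q ∈ Θ,
      pdx d k (fun r =>
        Complex.I * (σ : ℂ) ^ 2 * pdt d Ψ r / Ψ r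
          + ((σ : ℂ) ^ 4 / 2) * (∑ j, pdx d j (pdx d j Ψ) r) / Ψ r
          - ((U r.2 : ℝ) : ℂ)) q = 0 := by

  intro k q hq
  have hψ : Ψ q ≠ 0 := hne q hq
  have hmem : ∀ r ∈ Θ, Θ ∈ 𝓝 r := fun r hr => hΘ.mem_nhds hr
  have hC3 : ∀ r ∈ Θ, ContDiffAt ℝ 3 Ψ r := fun r hr => (hΨ r hr).contDiffAt (hmem r hr)
  have hC2 : ∀ r ∈ Θ, ContDiffAt ℝ 2 Ψ r := fun r hr => (hC3 r hr).of_le (by norm_num)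
  have hdΨ : ∀ r ∈ Θ, DifferentiableAt ℝ Ψ r := fun r hr => (hC2 r hr).differentiableAt two_ne_zero
  have hA2 : ∀ (v : ℝ × (Fin d → ℝ)), ∀ r ∈ Θ, ContDiffAt ℝ 2 (d1 Ψ v) r :=
    fun v r hr => contDiffAt_fderiv_apply (hC3 r hr) v
  have hdA : ∀ (v : ℝ × (Fin d → ℝ)), ∀ r ∈ Θ, DifferentiableAt ℝ (d1 Ψ v) r :=
    fun v r hr => (hA2 v r hr).differentiableAt two_ne_zero
  have hdB : ∀ (v w : ℝ × (Fin d → ℝ)), ∀ r ∈ Θ, DifferentiableAt ℝ (d2 Ψ v w) r :=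
    fun v w r hr => diff_fderiv_apply (hA2 v r hr) w
  -- the quotient function
  have hφF : ∀ r ∈ Θ, (fun r' => pdx d k Ψ r' / Ψ r') =ᶠ[𝓝 r]
      (fun r' => d1 Ψ (evv d k) r' / Ψ r') := by
    intro r hr
    filter_upwards [hmem r hr] with p hp
    rw [pdx_eq k (hdΨ p hp)]
  have hdφ : ∀ r ∈ Θ, DifferentiableAt ℝ (fun r' => d1 Ψ (evv d k) r' / Ψ r') r :=
    fun r hr => diffAt_div (hdA _ r hr) (hdΨ r hr) (hne r hr)
  have hder : ∀ (v : ℝ × (Fin d → ℝ)), ∀ r ∈ Θ,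
      fderiv ℝ (fun r' => d1 Ψ (evv d k) r' / Ψ r') r v
        = (d2 Ψ (evv d k) v r * Ψ r - d1 Ψ (evv d k) r * d1 Ψ v r) / (Ψ r) ^ 2 :=
    fun v r hr => fderiv_div_apply (hdA _ r hr) (hdΨ r hr) (hne r hr) v
  -- first derivatives of φ_k
  have T1 : pdt d (fun r => pdx d k Ψ r / Ψ r) q
      = (d2 Ψ (evv d k) (etv d) q * Ψ q - d1 Ψ (evv d k) q * d1 Ψ (etv d) q) / (Ψ q) ^ 2 := by
    rw [pdt_congr (hφF q hq), pdt_eq (hdφ q hq)]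
    exact hder (etv d) q hq
  have T2 : ∀ j, pdx d j (fun r => pdx d k Ψ r / Ψ r) q
      = (d2 Ψ (evv d k) (evv d j) q * Ψ q - d1 Ψ (evv d k) q * d1 Ψ (evv d j) q) / (Ψ q) ^ 2 := by
    intro j
    rw [pdx_congr j (hφF q hq), pdx_eq j (hdφ q hq)]
    exact hder (evv d j) q hq
  -- second derivatives of φ_k
  have hφ'F : ∀ j, ∀ r ∈ Θ,
      (fun r' => pdx d j (fun r'' => pdx d k Ψ r'' / Ψ r'') r') =ᶠ[𝓝 r]
      (fun r' => (d2 Ψ (evv d k) (evv d j) r' * Ψ r' - d1 Ψ (evv d k) r' * d1 Ψ (evv d j) r')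
        / (Ψ r') ^ 2) := by
    intro j r hr
    filter_upwards [hmem r hr] with p hp
    rw [pdx_congr j (hφF p hp), pdx_eq j (hdφ p hp)]
    exact hder (evv d j) p hp
  have hnum_d : ∀ j, ∀ r ∈ Θ, DifferentiableAt ℝ
      (fun r' => d2 Ψ (evv d k) (evv d j) r' * Ψ r' - d1 Ψ (evv d k) r' * d1 Ψ (evv d j) r') r :=
    fun j r hr => ((hdB _ _ r hr).mul (hdΨ r hr)).sub ((hdA _ r hr).mul (hdA _ r hr))
  have hsq_d : ∀ r ∈ Θ, DifferentiableAt ℝ (fun r' => (Ψ r') ^ 2) r :=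
    fun r hr => (hdΨ r hr).pow 2
  have T3 : ∀ j, pdx d j (pdx d j (fun r => pdx d k Ψ r / Ψ r)) q
      = (d3 Ψ (evv d k) (evv d j) (evv d j) q * Ψ q
            - d1 Ψ (evv d k) q * d2 Ψ (evv d j) (evv d j) q) / (Ψ q) ^ 2
        - 2 * d1 Ψ (evv d j) q * (d2 Ψ (evv d k) (evv d j) q * Ψ q
            - d1 Ψ (evv d k) q * d1 Ψ (evv d j) q) / (Ψ q) ^ 3 := by
    intro j
    rw [pdx_congr j (hφ'F j q hq),
      pdx_eq j (diffAt_div (hnum_d j q hq) (hsq_d q hq) (pow_ne_zero 2 hψ))]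
    have h1 := fderiv_div_apply (hnum_d j q hq) (hsq_d q hq) (pow_ne_zero 2 hψ) (evv d j)
    have h2 : fderiv ℝ (fun r' => d2 Ψ (evv d k) (evv d j) r' * Ψ r'
          - d1 Ψ (evv d k) r' * d1 Ψ (evv d j) r') q (evv d j)
        = (d3 Ψ (evv d k) (evv d j) (evv d j) q * Ψ q
            + d2 Ψ (evv d k) (evv d j) q * d1 Ψ (evv d j) q)
          - (d2 Ψ (evv d k) (evv d j) q * d1 Ψ (evv d j) q
            + d1 Ψ (evv d k) q * d2 Ψ (evv d j) (evv d j) q) := by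
      rw [fderiv_fun_sub ((hdB _ _ q hq).fun_mul (hdΨ q hq)) ((hdA _ q hq).fun_mul (hdA _ q hq))]
      rw [ContinuousLinearMap.sub_apply,
        fderiv_mul_apply (hdB _ _ q hq) (hdΨ q hq),
        fderiv_mul_apply (hdA _ q hq) (hdA _ q hq)]
      rfl
    have h3 : fderiv ℝ (fun r' => (Ψ r') ^ 2) q (evv d j) = 2 * Ψ q * d1 Ψ (evv d j) q := by
      have hsq : (fun r' : ℝ × (Fin d → ℝ) => (Ψ r') ^ 2) = fun r' => Ψ r' * Ψ r' := by
        ext r'; ring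
      rw [hsq, fderiv_mul_apply (hdΨ q hq) (hdΨ q hq)]
      unfold d1; ring
    show fderiv ℝ (fun r' => (d2 Ψ (evv d k) (evv d j) r' * Ψ r'
        - d1 Ψ (evv d k) r' * d1 Ψ (evv d j) r') / (Ψ r') ^ 2) q (evv d j) = _
    rw [h1, h2, h3]
    field_simp
    ring
  -- symmetry of mixed partial derivatives
  have SymΘ : ∀ (v w : ℝ × (Fin d → ℝ)), ∀ r ∈ Θ, d2 Ψ v w r = d2 Ψ w v r :=
    fun v w r hr => d2_comm (hC2 r hr) v w
  have Sym1 : d2 Ψ (etv d) (evv d k) q = d2 Ψ (evv d k) (etv d) q := SymΘ _ _ q hq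
  have Sym2 : ∀ j, d3 Ψ (evv d j) (evv d j) (evv d k) q
      = d3 Ψ (evv d k) (evv d j) (evv d j) q := by
    intro j
    have h1 : d3 Ψ (evv d j) (evv d j) (evv d k) q = d3 Ψ (evv d j) (evv d k) (evv d j) q :=
      d2_comm (hA2 (evv d j) q hq) (evv d j) (evv d k)
    have hEq : (d2 Ψ (evv d j) (evv d k)) =ᶠ[𝓝 q] (d2 Ψ (evv d k) (evv d j)) := by
      filter_upwards [hmem q hq] with p hp
      exact SymΘ _ _ p hp
    have h2 : d3 Ψ (evv d j) (evv d k) (evv d j) q = d3 Ψ (evv d k) (evv d j) (evv d j) q := by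
      unfold d3
      rw [hEq.fderiv_eq]
    rw [h1, h2]
  -- the potential part
  have hdU : HasFDerivAt (fun r : ℝ × (Fin d → ℝ) => ((U r.2 : ℝ) : ℂ))
      (Complex.ofRealCLM.comp ((fderiv ℝ U q.2).comp (ContinuousLinearMap.snd ℝ ℝ (Fin d → ℝ)))) q := by
    have h1 : HasFDerivAt (fun r : ℝ × (Fin d → ℝ) => U r.2)
        ((fderiv ℝ U q.2).comp (ContinuousLinearMap.snd ℝ ℝ (Fin d → ℝ))) q :=
      ((hU.differentiable one_ne_zero) q.2).hasFDerivAt.comp q hasFDerivAt_snd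
    exact Complex.ofRealCLM.hasFDerivAt.comp q h1
  -- replace the target function by a differentiable representative
  have hGF : (fun r => Complex.I * (σ : ℂ) ^ 2 * pdt d Ψ r / Ψ r
        + ((σ : ℂ) ^ 4 / 2) * (∑ j, pdx d j (pdx d j Ψ) r) / Ψ r - ((U r.2 : ℝ) : ℂ)) =ᶠ[𝓝 q]
      (fun r => Complex.I * (σ : ℂ) ^ 2 * d1 Ψ (etv d) r / Ψ r
        + ((σ : ℂ) ^ 4 / 2) * (∑ j, d2 Ψ (evv d j) (evv d j) r) / Ψ r - ((U r.2 : ℝ) : ℂ)) := by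
    filter_upwards [hmem q hq] with p hp
    have h1 : pdt d Ψ p = d1 Ψ (etv d) p := pdt_eq (hdΨ p hp)
    have h2 : ∀ j, pdx d j (pdx d j Ψ) p = d2 Ψ (evv d j) (evv d j) p := by
      intro j
      have hev : (pdx d j Ψ) =ᶠ[𝓝 p] d1 Ψ (evv d j) := by
        filter_upwards [hmem p hp] with p' hp'
        exact pdx_eq j (hdΨ p' hp')
      rw [pdx_congr j hev, pdx_eq j (hdA _ p hp)]
      exact rfl
    rw [h1, Finset.sum_congr rfl fun j _ => h2 j]
  have hd1 : DifferentiableAt ℝ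
      (fun r => Complex.I * (σ : ℂ) ^ 2 * d1 Ψ (etv d) r / Ψ r) q :=
    diffAt_div ((hdA (etv d) q hq).const_mul _) (hdΨ q hq) hψ
  have hdsum : DifferentiableAt ℝ (fun r => ∑ j, d2 Ψ (evv d j) (evv d j) r) q := by
    apply DifferentiableAt.fun_sum
    exact fun j _ => hdB _ _ q hq
  have hd2' : DifferentiableAt ℝ
      (fun r => ((σ : ℂ) ^ 4 / 2) * (∑ j, d2 Ψ (evv d j) (evv d j) r) / Ψ r) q :=
    diffAt_div (hdsum.const_mul _) (hdΨ q hq) hψ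
  have hdG : DifferentiableAt ℝ
      (fun r => Complex.I * (σ : ℂ) ^ 2 * d1 Ψ (etv d) r / Ψ r
        + ((σ : ℂ) ^ 4 / 2) * (∑ j, d2 Ψ (evv d j) (evv d j) r) / Ψ r - ((U r.2 : ℝ) : ℂ)) q :=
    (hd1.add hd2').sub hdU.differentiableAt
  rw [pdx_congr k hGF, pdx_eq k hdG]
  -- compute the three pieces
  have hG1 : fderiv ℝ (fun r => Complex.I * (σ : ℂ) ^ 2 * d1 Ψ (etv d) r / Ψ r) q (evv d k)
      = (Complex.I * (σ : ℂ) ^ 2 * d2 Ψ (etv d) (evv d k) q * Ψ q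
          - Complex.I * (σ : ℂ) ^ 2 * d1 Ψ (etv d) q * d1 Ψ (evv d k) q) / (Ψ q) ^ 2 := by
    rw [fderiv_div_apply ((hdA (etv d) q hq).const_mul _) (hdΨ q hq) hψ,
      fderiv_const_mul (hdA (etv d) q hq)]
    simp only [ContinuousLinearMap.coe_smul', Pi.smul_apply, smul_eq_mul]
    unfold d2 d1
    ring
  have hG2 : fderiv ℝ
      (fun r => ((σ : ℂ) ^ 4 / 2) * (∑ j, d2 Ψ (evv d j) (evv d j) r) / Ψ r) q (evv d k)
      = (((σ : ℂ) ^ 4 / 2) * (∑ j, d3 Ψ (evv d j) (evv d j) (evv d k) q) * Ψ q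
          - ((σ : ℂ) ^ 4 / 2) * (∑ j, d2 Ψ (evv d j) (evv d j) q) * d1 Ψ (evv d k) q)
        / (Ψ q) ^ 2 := by
    rw [fderiv_div_apply (hdsum.const_mul _) (hdΨ q hq) hψ, fderiv_const_mul hdsum,
      fderiv_fun_sum (fun j _ => hdB _ _ q hq)]
    simp only [ContinuousLinearMap.coe_smul', Pi.smul_apply, smul_eq_mul,
      ContinuousLinearMap.coe_sum', Finset.sum_apply]
    unfold d3 d2 d1
    ring
  have hG3 : fderiv ℝ (fun r : ℝ × (Fin d → ℝ) => ((U r.2 : ℝ) : ℂ)) q (evv d k)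
      = ((fderiv ℝ U q.2 (Pi.single k 1) : ℝ) : ℂ) := by
    rw [hdU.fderiv]
    simp [evv]
  -- rewrite the hypothesis
  have heq' := heq k q hq
  rw [T1] at heq'
  have hsum1 : (∑ j, (-Complex.I * (σ : ℂ) ^ 2 * (pdx d j Ψ q / Ψ q))
        * pdx d j (fun r => pdx d k Ψ r / Ψ r) q)
      = -Complex.I * (σ : ℂ) ^ 2
          * (Ψ q * (∑ j, d1 Ψ (evv d j) q * d2 Ψ (evv d k) (evv d j) q)
            - d1 Ψ (evv d k) q * (∑ j, d1 Ψ (evv d j) q * d1 Ψ (evv d j) q)) / (Ψ q) ^ 3 := by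
    calc (∑ j, (-Complex.I * (σ : ℂ) ^ 2 * (pdx d j Ψ q / Ψ q))
          * pdx d j (fun r => pdx d k Ψ r / Ψ r) q)
        = ∑ j, (-Complex.I * (σ : ℂ) ^ 2 / (Ψ q) ^ 3)
            * (Ψ q * (d1 Ψ (evv d j) q * d2 Ψ (evv d k) (evv d j) q)
              - d1 Ψ (evv d k) q * (d1 Ψ (evv d j) q * d1 Ψ (evv d j) q)) := by
          refine Finset.sum_congr rfl fun j _ => ?_
          rw [pdx_eq j (hdΨ q hq), T2 j]
          ring
      _ = (-Complex.I * (σ : ℂ) ^ 2 / (Ψ q) ^ 3)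
            * ∑ j, (Ψ q * (d1 Ψ (evv d j) q * d2 Ψ (evv d k) (evv d j) q)
              - d1 Ψ (evv d k) q * (d1 Ψ (evv d j) q * d1 Ψ (evv d j) q)) := by
          rw [Finset.mul_sum]
      _ = _ := by
          rw [Finset.sum_sub_distrib, ← Finset.mul_sum, ← Finset.mul_sum]
          ring
  rw [hsum1] at heq'
  have hsum2 : (∑ j, pdx d j (pdx d j (fun r => pdx d k Ψ r / Ψ r)) q)
      = (Ψ q * (∑ j, d3 Ψ (evv d k) (evv d j) (evv d j) q)
          - d1 Ψ (evv d k) q * (∑ j, d2 Ψ (evv d j) (evv d j) q)) / (Ψ q) ^ 2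
        - 2 * (Ψ q * (∑ j, d1 Ψ (evv d j) q * d2 Ψ (evv d k) (evv d j) q)
          - d1 Ψ (evv d k) q * (∑ j, d1 Ψ (evv d j) q * d1 Ψ (evv d j) q)) / (Ψ q) ^ 3 := by
    calc (∑ j, pdx d j (pdx d j (fun r => pdx d k Ψ r / Ψ r)) q)
        = ∑ j, (((1 : ℂ) / (Ψ q) ^ 2) * (Ψ q * d3 Ψ (evv d k) (evv d j) (evv d j) q
              - d1 Ψ (evv d k) q * d2 Ψ (evv d j) (evv d j) q)
            - (2 / (Ψ q) ^ 3) * (Ψ q * (d1 Ψ (evv d j) q * d2 Ψ (evv d k) (evv d j) q)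
              - d1 Ψ (evv d k) q * (d1 Ψ (evv d j) q * d1 Ψ (evv d j) q))) := by
          refine Finset.sum_congr rfl fun j _ => ?_
          rw [T3 j]
          ring
      _ = ((1 : ℂ) / (Ψ q) ^ 2) * ∑ j, (Ψ q * d3 Ψ (evv d k) (evv d j) (evv d j) q
              - d1 Ψ (evv d k) q * d2 Ψ (evv d j) (evv d j) q)
          - (2 / (Ψ q) ^ 3) * ∑ j, (Ψ q * (d1 Ψ (evv d j) q * d2 Ψ (evv d k) (evv d j) q)
              - d1 Ψ (evv d k) q * (d1 Ψ (evv d j) q * d1 Ψ (evv d j) q)) := by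
          rw [Finset.sum_sub_distrib, Finset.mul_sum, Finset.mul_sum]
      _ = _ := by
          rw [Finset.sum_sub_distrib, Finset.sum_sub_distrib,
            ← Finset.mul_sum, ← Finset.mul_sum, ← Finset.mul_sum, ← Finset.mul_sum]
          ring
  rw [hsum2] at heq'
  -- assemble and finish
  show fderiv ℝ (fun r => Complex.I * (σ : ℂ) ^ 2 * d1 Ψ (etv d) r / Ψ r
      + ((σ : ℂ) ^ 4 / 2) * (∑ j, d2 Ψ (evv d j) (evv d j) r) / Ψ r
      - ((U r.2 : ℝ) : ℂ)) q (evv d k) = 0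
  rw [fderiv_fun_sub (hd1.fun_add hd2') hdU.differentiableAt, ContinuousLinearMap.sub_apply,
    fderiv_fun_add hd1 hd2', ContinuousLinearMap.add_apply, hG1, hG2, hG3, Sym1,
    Finset.sum_congr rfl fun j (_ : j ∈ Finset.univ) => Sym2 j]
  linear_combination heq'
    + ((σ : ℂ) ^ 4 / 2) * (Ψ q * (∑ j, d3 Ψ (evv d k) (evv d j) (evv d j) q)
        - d1 Ψ (evv d k) q * (∑ j, d2 Ψ (evv d j) (evv d j) q)) / (Ψ q) ^ 2 * Complex.I_sq
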